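/- arXiv:2011.11264 — 2 statements merged into one kernel-verified Lean document; each statement's English description precedes it below -/
import Mathlib

section
/- Let V be a finite-dimensional real inner product space, U ⊆ V a subspace, B : V → V* linear, and ℓ ∈ V*. A pair (ε, u) ∈ V × U satisfies (ε, v) + ⟨B u, v⟩ = ℓ(v) for all v ∈ V and ⟨B z, ε⟩ = 0 for all z ∈ U if and only if u minimizes z ↦ ½‖R⁻¹(ℓ − B z)‖² over U and ε = R⁻¹(ℓ − B u), where R is the Riesz map of V. (Here B z is tested against ε via the bilinear form b(z,ε) = ⟨B z, ε⟩.) -/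
open InnerProductSpace

/-!
The first equation of the mixed system says exactly that `ε` is the Riesz representative of the
residual `ℓ - B u`. Once this is known, writing `R⁻¹(ℓ - B z) = R⁻¹ℓ - R⁻¹B z` turns the
minimization into a linear least-squares problem, whose minimizers over `U` are characterized by
orthogonality of the residual to `R⁻¹B(U)`; and `⟪ε, R⁻¹B z⟫ = B z ε` is the second equation.
-/

theorem InnerProductSpace.forall_inner_add_eq_iff_eq_toDual_symm {𝕜 E : Type*} [RCLike 𝕜]
    [NormedAddCommGroup E] [InnerProductSpace 𝕜 E] [CompleteSpace E]
    (ε : E) (φ ψ : StrongDual 𝕜 E) :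
    (∀ v, ⟪ε, v⟫_𝕜 + φ v = ψ v) ↔ ε = (toDual 𝕜 E).symm (ψ - φ) := by
  simp_rw [LinearIsometryEquiv.eq_symm_apply, ContinuousLinearMap.ext_iff, toDual_apply_apply,
    sub_apply, eq_sub_iff_add_eq]

theorem Submodule.norm_sub_eq_iInf_iff_forall_le {F : Type*} [NormedAddCommGroup F]
    [Module ℝ F] (K : Submodule ℝ F) (u : F) {v : F} (hv : v ∈ K) :
    ‖u - v‖ = ⨅ w : K, ‖u - w‖ ↔ ∀ w ∈ K, ‖u - v‖ ≤ ‖u - w‖ := by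
  have hbdd : BddBelow (Set.range fun w : K => ‖u - w‖) :=
    ⟨0, by rintro _ ⟨w, rfl⟩; exact norm_nonneg _⟩
  constructor
  · intro h w hw
    exact h ▸ ciInf_le hbdd ⟨w, hw⟩
  · intro h
    exact le_antisymm (le_ciInf fun w => h w w.2) (ciInf_le hbdd ⟨v, hv⟩)

theorem forall_norm_sub_apply_le_iff_inner_eq_zero {M F : Type*} [AddCommGroup M] [Module ℝ M]
    [NormedAddCommGroup F] [InnerProductSpace ℝ F] (U : Submodule ℝ M) (A : M →ₗ[ℝ] F) (b : F)
    {u : M} (hu : u ∈ U) :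
    (∀ z ∈ U, ‖b - A u‖ ≤ ‖b - A z‖) ↔ ∀ z ∈ U, ⟪b - A u, A z⟫_ℝ = 0 := by
  have hAu : A u ∈ U.map A := Submodule.mem_map_of_mem hu
  have h := ((U.map A).norm_sub_eq_iInf_iff_forall_le b hAu).symm.trans
    ((U.map A).norm_eq_iInf_iff_real_inner_eq_zero hAu)
  simpa only [Submodule.mem_map, forall_exists_index, and_imp, forall_apply_eq_imp_iff₂] using h

/-- Equivalence of the constrained residual minimization problem and the
saddle-point (mixed) formulation. -/
theorem stmt_6 {V : Type*} [NormedAddCommGroup V] [InnerProductSpace ℝ V]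
    [FiniteDimensional ℝ V] (U : Submodule ℝ V)
    (B : V →ₗ[ℝ] (V →L[ℝ] ℝ)) (ℓ : V →L[ℝ] ℝ)
    (ε : V) (u : V) (hu : u ∈ U) :
    ((∀ v : V, ⟪ε, v⟫_ℝ + B u v = ℓ v) ∧ (∀ z ∈ U, B z ε = 0)) ↔
    ((∀ z ∈ U,
        (1 / 2) * ‖(toDual ℝ V).symm (ℓ - B u)‖ ^ 2
          ≤ (1 / 2) * ‖(toDual ℝ V).symm (ℓ - B z)‖ ^ 2) ∧
      ε = (toDual ℝ V).symm (ℓ - B u)) := by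
  rw [forall_inner_add_eq_iff_eq_toDual_symm, and_comm]
  refine and_congr_left fun hε => ?_
  subst hε
  let A : V →ₗ[ℝ] V := (toDual ℝ V).symm.toLinearEquiv.toLinearMap.comp B
  have hresidual : ∀ z, (toDual ℝ V).symm (ℓ - B z) = (toDual ℝ V).symm ℓ - A z := fun z =>
    map_sub _ _ _
  have hhalf_sq : ∀ a b : V, (1 / 2) * ‖a‖ ^ 2 ≤ (1 / 2) * ‖b‖ ^ 2 ↔ ‖a‖ ≤ ‖b‖ := fun a b => by
    rw [mul_le_mul_iff_right₀ (by norm_num), sq_le_sq₀ (norm_nonneg a) (norm_nonneg b)]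
  simp_rw [hhalf_sq, hresidual, forall_norm_sub_apply_le_iff_inner_eq_zero U A _ hu]
  refine forall₂_congr fun z _ => ?_
  rw [real_inner_comm, show A z = (toDual ℝ V).symm (B z) from rfl, toDual_symm_apply]
end

section
/- Let b be a bilinear form on a finite-dimensional inner product space V satisfying the inf-sup condition sup_{v≠0} b(w,v)/‖v‖ ≥ C_sta‖w‖ for all w ∈ V. Let u^dG solve b(u^dG,v) = ℓ(v) for all v ∈ V, and let (ε,u) solve the saddle-point problem over V × U. Then ‖u − u^dG‖ ≤ (1/C_sta)‖ε‖. -/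
open InnerProductSpace

/-- Distance between the residual-minimization solution and the discrete
Galerkin solution, controlled by the residual representative. -/
theorem stmt_9 {V : Type*} [NormedAddCommGroup V] [InnerProductSpace ℝ V]
    [FiniteDimensional ℝ V] (U : Submodule ℝ V)
    (b : V →ₗ[ℝ] V →ₗ[ℝ] ℝ) (ℓ : V →L[ℝ] ℝ) (Csta : ℝ) (hCsta : 0 < Csta)
    (hinfsup : ∀ w : V, Csta * ‖w‖ ≤ ⨆ v : {v : V // v ≠ 0}, b w v / ‖v.1‖)
    (udG : V) (hudG : ∀ v : V, b udG v = ℓ v)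
    (ε : V) (u : V) (hu : u ∈ U)
    (hsp1 : ∀ v : V, ⟪ε, v⟫_ℝ = ℓ v - b u v)
    (hsp2 : ∀ z ∈ U, b z ε = 0) :
    ‖u - udG‖ ≤ (1 / Csta) * ‖ε‖ := by
  have key : Csta * ‖u - udG‖ ≤ ‖ε‖ := by
    refine (hinfsup (u - udG)).trans (Real.iSup_le ?_ (norm_nonneg _))
    rintro ⟨v, hv⟩
    have hbv : b (u - udG) v = -⟪ε, v⟫_ℝ := by
      simp [hsp1 v, hudG v]
    have hcs : |⟪ε, v⟫_ℝ| ≤ ‖ε‖ * ‖v‖ := abs_real_inner_le_norm ε v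
    have hpos : (0:ℝ) < ‖v‖ := norm_pos_iff.mpr hv
    rw [div_le_iff₀ hpos, hbv]
    calc -⟪ε, v⟫_ℝ ≤ |⟪ε, v⟫_ℝ| := neg_le_abs _
    _ ≤ ‖ε‖ * ‖v‖ := hcs
  rw [one_div, ← div_eq_inv_mul, le_div_iff₀ hCsta, mul_comm]
  exact key
end
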